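/- arXiv:2404.07641 — 6 statements merged into one kernel-verified Lean document; each statement's English description precedes it below -/
import Mathlib

section
/- The modified Patankar-Euler scheme is conservative: if f^{n+1} solves the MPE equations f_i^{n+1} = f_i^n + Δt(∑_j p_{i,j}(f^n) f_j^{n+1}/f_j^n − ∑_j d_{i,j}(f^n) f_i^{n+1}/f_i^n) with p_{i,j} = d_{j,i} for i ≠ j and p_{i,i} = d_{i,i} = 0, then ∑_i f_i^{n+1} = ∑_i f_i^n. -/
/-! Summed over `i`, the production and destruction terms of the scheme are the same double sum
with the indices swapped, because `p i j = d j i` for all `i, j` (both sides vanish on the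
diagonal); so the `Δt`-term drops out of the total mass. -/

open Finset

section ProductionDestruction

variable {ι R : Type*} [CommRing R]

lemma eq_swap_of_off_diag_of_diag_eq_zero {p d : ι → ι → R}
    (hsym : ∀ i j, i ≠ j → p i j = d j i) (hpd : ∀ i, p i i = 0) (hdd : ∀ i, d i i = 0)
    (i j : ι) : p i j = d j i := by
  obtain rfl | hij := eq_or_ne i j
  · rw [hpd, hdd]
  · exact hsym i j hij

lemma sum_production_sub_destruction_eq_zero [Fintype ι] {p d : ι → ι → R}
    (hswap : ∀ i j, p i j = d j i) (g : ι → R) : ∑ i, (∑ j, p i j * g j - ∑ j, d i j * g i) = 0 := by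
  rw [sum_sub_distrib, sub_eq_zero, sum_comm]
  simp only [hswap]

end ProductionDestruction

theorem MPE_conservative_general
    (N : ℕ) (Δt : ℝ)
    (fn fn1 : Fin N → ℝ)
    (p d : Fin N → Fin N → ℝ)
    (hsym : ∀ i j, i ≠ j → p i j = d j i)
    (hpd : ∀ i, p i i = 0) (hdd : ∀ i, d i i = 0)
    (hupd : ∀ i, fn1 i = fn i +
      Δt * (∑ j, p i j * (fn1 j / fn j) - ∑ j, d i j * (fn1 i / fn i))) :
    ∑ i, fn1 i = ∑ i, fn i := by
  have hcancel := sum_production_sub_destruction_eq_zero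
    (eq_swap_of_off_diag_of_diag_eq_zero hsym hpd hdd) (fun j => fn1 j / fn j)
  calc ∑ i, fn1 i
      = ∑ i, fn i + Δt * ∑ i, (∑ j, p i j * (fn1 j / fn j) - ∑ j, d i j * (fn1 i / fn i)) := by
        rw [sum_congr rfl fun i _ => hupd i, sum_add_distrib, mul_sum]
    _ = ∑ i, fn i := by rw [hcancel, mul_zero, add_zero]

theorem MPE_conservative
    (N : ℕ) (Δt : ℝ) (hΔt : 0 < Δt)
    (fn fn1 : Fin N → ℝ) (hfn : ∀ i, 0 < fn i)
    (p d : Fin N → Fin N → ℝ)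
    (hp : ∀ i j, 0 ≤ p i j) (hd : ∀ i j, 0 ≤ d i j)
    (hsym : ∀ i j, i ≠ j → p i j = d j i)
    (hpd : ∀ i, p i i = 0) (hdd : ∀ i, d i i = 0)
    (hupd : ∀ i, fn1 i = fn i +
      Δt * (∑ j, p i j * (fn1 j / fn j) - ∑ j, d i j * (fn1 i / fn i))) :
    ∑ i, fn1 i = ∑ i, fn i :=
  MPE_conservative_general N Δt fn fn1 p d hsym hpd hdd hupd
end

section
/- The linear system defining the modified Patankar-Euler step has a system matrix A with A_{ii} = 1 + Δt ∑_j d_{i,j}(f^n)/f_i^n ≥ 1 and off-diagonal entries A_{ij} = −Δt p_{i,j}(f^n)/f_j^n ≤ 0 for i ≠ j, and A is strictly column diagonally dominant when all d_{i,j} with j ≠ i satisfy p = d symmetry; consequently A is invertible and its inverse has nonnegative entries (A is an M-matrix). -/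
/-!
The system matrix of the MPE step is a Z-matrix whose columns sum to `1`: by the symmetry
`p i j = d j i`, the off-diagonal part of column `j` removes exactly what `Δt ∑ i, d j i / fn j`
adds to the diagonal. A Z-matrix with positive row sums satisfies a discrete minimum principle
(`B *ᵥ x ≥ 0` forces `x ≥ 0`, by looking at a minimal entry of `x`), which gives both
invertibility and nonnegativity of the inverse; apply it to `Aᵀ`.
-/

open Finset

namespace Matrix

variable {ι R : Type*} [Fintype ι] [Field R] [LinearOrder R] [IsStrictOrderedRing R]
  {B : Matrix ι ι R}

theorem sum_row_pos_of_sum_abs_lt_diag [DecidableEq ι] {i : ι}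
    (h : ∑ k ∈ univ.erase i, |B i k| < B i i) : 0 < ∑ k, B i k := by
  have hneg : -∑ k ∈ univ.erase i, B i k ≤ ∑ k ∈ univ.erase i, |B i k| := by
    rw [← sum_neg_distrib]
    exact sum_le_sum fun k _ => neg_le_abs _
  rw [← add_sum_erase _ _ (mem_univ i)]
  linarith

variable (hoff : ∀ i k, i ≠ k → B i k ≤ 0) (hrow : ∀ i, 0 < ∑ k, B i k)
include hoff hrow

theorem nonneg_of_nonneg_mulVec {x : ι → R} (hx : 0 ≤ B *ᵥ x) : 0 ≤ x := by
  intro k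
  have : Nonempty ι := ⟨k⟩
  obtain ⟨i, hi⟩ := (Finite.exists_min x : ∃ i, ∀ k, x i ≤ x k)
  suffices 0 ≤ x i from this.trans (hi k)
  have hspread : ∑ k, B i k * (x k - x i) ≤ 0 := by
    refine sum_nonpos fun k _ => ?_
    rcases eq_or_ne i k with rfl | hik
    · simp
    · exact mul_nonpos_of_nonpos_of_nonneg (hoff i k hik) (sub_nonneg.2 (hi k))
  have hmin : (B *ᵥ x) i ≤ (∑ k, B i k) * x i := by
    have : (B *ᵥ x) i = (∑ k, B i k) * x i + ∑ k, B i k * (x k - x i) := by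
      simp only [mulVec, dotProduct, sum_mul, ← sum_add_distrib, mul_sub, add_sub_cancel]
    linarith
  exact nonneg_of_mul_nonneg_right ((hx i).trans hmin) (hrow i)

variable [DecidableEq ι]

theorem det_ne_zero_of_nonpos_of_sum_row_pos : B.det ≠ 0 := by
  intro hdet
  obtain ⟨v, hv, hBv⟩ := exists_mulVec_eq_zero_iff.2 hdet
  have hpos : 0 ≤ v := nonneg_of_nonneg_mulVec hoff hrow hBv.ge
  have hneg : 0 ≤ -v := nonneg_of_nonneg_mulVec hoff hrow (by rw [mulVec_neg, hBv, neg_zero])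
  exact hv (le_antisymm (neg_nonneg.1 hneg) hpos)

theorem inv_nonneg_of_nonpos_of_sum_row_pos (i j : ι) : 0 ≤ B⁻¹ i j := by
  have hdet : IsUnit B.det := (det_ne_zero_of_nonpos_of_sum_row_pos hoff hrow).isUnit
  have hcol : B *ᵥ B⁻¹.col j = Pi.single j 1 := by
    rw [← mulVec_single_one, mulVec_mulVec, mul_nonsing_inv _ hdet, one_mulVec]
  have hsingle : (0 : ι → R) ≤ Pi.single j 1 := Pi.single_nonneg.2 zero_le_one
  exact nonneg_of_nonneg_mulVec hoff hrow (hcol ▸ hsingle) i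

end Matrix

open Matrix

theorem MPE_matrix_is_M_matrix_general
    (N : ℕ) (Δt : ℝ) (hΔt : 0 < Δt)
    (fn : Fin N → ℝ) (hfn : ∀ i, 0 < fn i)
    (p d : Fin N → Fin N → ℝ)
    (hp : ∀ i j, 0 ≤ p i j) (hd : ∀ i j, 0 ≤ d i j)
    (hsym : ∀ i j, i ≠ j → p i j = d j i)
    (hdd : ∀ i, d i i = 0)
    (A : Matrix (Fin N) (Fin N) ℝ)
    (hAdiag : ∀ i, A i i = 1 + Δt * ∑ j, d i j / fn i)
    (hAoff : ∀ i j, i ≠ j → A i j = -(Δt * p i j / fn j)) :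
    (∀ i, 1 ≤ A i i) ∧
    (∀ i j, i ≠ j → A i j ≤ 0) ∧
    (∀ j, ∑ i ∈ Finset.univ.erase j, |A i j| < A j j) ∧
    IsUnit A ∧
    (∀ i j, 0 ≤ A⁻¹ i j) := by
  have hdiag : ∀ i, 1 ≤ A i i := fun i => by
    rw [hAdiag i]
    exact le_add_of_nonneg_right <| mul_nonneg hΔt.le <|
      sum_nonneg fun j _ => div_nonneg (hd i j) (hfn i).le
  have hflow : ∀ i j, 0 ≤ Δt * p i j / fn j := fun i j =>
    div_nonneg (mul_nonneg hΔt.le (hp i j)) (hfn j).le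
  have hoff : ∀ i j, i ≠ j → A i j ≤ 0 := fun i j hij => by
    rw [hAoff i j hij, neg_nonpos]
    exact hflow i j
  have hcol : ∀ j, ∑ i ∈ univ.erase j, |A i j| = A j j - 1 := fun j => by
    rw [hAdiag j, add_sub_cancel_left, mul_sum, ← add_sum_erase _ _ (mem_univ j), hdd j,
      zero_div, mul_zero, zero_add]
    refine sum_congr rfl fun i hi => ?_
    have hij := ne_of_mem_erase hi
    rw [hAoff i j hij, abs_neg, abs_of_nonneg (hflow i j), hsym i j hij, mul_div_assoc]
  have hdom : ∀ j, ∑ i ∈ univ.erase j, |A i j| < A j j := fun j => hcol j ▸ sub_one_lt _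
  have hoffT : ∀ i j, i ≠ j → Aᵀ i j ≤ 0 := fun i j hij => hoff j i hij.symm
  have hrowT : ∀ i, 0 < ∑ j, Aᵀ i j := fun i => sum_row_pos_of_sum_abs_lt_diag (hdom i)
  refine ⟨hdiag, hoff, hdom, ?_, fun i j => ?_⟩
  · rw [isUnit_iff_isUnit_det, ← det_transpose]
    exact (det_ne_zero_of_nonpos_of_sum_row_pos hoffT hrowT).isUnit
  · rw [← transpose_apply A⁻¹, transpose_nonsing_inv]
    exact inv_nonneg_of_nonpos_of_sum_row_pos hoffT hrowT j i

theorem MPE_matrix_is_M_matrix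
    (N : ℕ) (Δt : ℝ) (hΔt : 0 < Δt)
    (fn : Fin N → ℝ) (hfn : ∀ i, 0 < fn i)
    (p d : Fin N → Fin N → ℝ)
    (hp : ∀ i j, 0 ≤ p i j) (hd : ∀ i j, 0 ≤ d i j)
    (hsym : ∀ i j, i ≠ j → p i j = d j i)
    (hpd : ∀ i, p i i = 0) (hdd : ∀ i, d i i = 0)
    (A : Matrix (Fin N) (Fin N) ℝ)
    (hAdiag : ∀ i, A i i = 1 + Δt * ∑ j, d i j / fn i)
    (hAoff : ∀ i j, i ≠ j → A i j = -(Δt * p i j / fn j)) :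
    (∀ i, 1 ≤ A i i) ∧
    (∀ i j, i ≠ j → A i j ≤ 0) ∧
    (∀ j, ∑ i ∈ Finset.univ.erase j, |A i j| < A j j) ∧
    IsUnit A ∧
    (∀ i j, 0 ≤ A⁻¹ i j) :=
  MPE_matrix_is_M_matrix_general N Δt hΔt fn hfn p d hp hd hsym hdd A hAdiag hAoff
end

section
/- The modified Patankar-Euler scheme is unconditionally positive: for any Δt > 0 and any f^n with all components positive, the (unique) solution f^{n+1} of the MPE linear system has all components positive. -/
/-! The MPE step solves `A fⁿ⁺¹ = fⁿ` for a matrix `A` whose off-diagonal entries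
`-Δt p i j / fⁿ_j` are nonpositive and whose columns all sum to `1`, because `p i j = d j i`.
For such a matrix, summing the equations over `S = {i | fⁿ⁺¹_i ≤ 0}` gives
`0 < ∑ i ∈ S, fⁿ_i = ∑ j, (∑ i ∈ S, A i j) * fⁿ⁺¹_j ≤ 0` unless `S` is empty: for `j ∈ S` the
partial column sum is at least the full one, and for `j ∉ S` it has only off-diagonal entries. -/

open Finset Matrix

namespace Matrix

variable {ι R : Type*} [Fintype ι] [DecidableEq ι] [CommRing R] [LinearOrder R]
  [IsStrictOrderedRing R] {A : Matrix ι ι R}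

lemma sum_apply_nonneg_of_mem (hoff : ∀ i j, i ≠ j → A i j ≤ 0) (hcol : ∀ j, 0 ≤ ∑ i, A i j)
    {s : Finset ι} {j : ι} (hj : j ∈ s) : 0 ≤ ∑ i ∈ s, A i j := by
  have hout : ∑ i ∈ sᶜ, A i j ≤ 0 :=
    sum_nonpos fun i hi => hoff i j (ne_of_mem_of_not_mem hj (mem_compl.mp hi)).symm
  linarith [hcol j, sum_add_sum_compl s (fun i => A i j)]

lemma pos_of_mulVec_pos (hoff : ∀ i j, i ≠ j → A i j ≤ 0) (hcol : ∀ j, 0 ≤ ∑ i, A i j)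
    {x : ι → R} (hAx : ∀ i, 0 < (A *ᵥ x) i) (i : ι) : 0 < x i := by
  by_contra! hi
  set S := univ.filter fun k => x k ≤ 0
  have hpos : 0 < ∑ k ∈ S, (A *ᵥ x) k := sum_pos (fun k _ => hAx k) ⟨i, by simp [S, hi]⟩
  have hswap : ∑ k ∈ S, (A *ᵥ x) k = ∑ j, (∑ k ∈ S, A k j) * x j := by
    simp only [mulVec, dotProduct, sum_mul]
    exact sum_comm
  have hnonpos : ∑ j, (∑ k ∈ S, A k j) * x j ≤ 0 := by
    refine sum_nonpos fun j _ => ?_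
    by_cases hj : j ∈ S
    · exact mul_nonpos_of_nonneg_of_nonpos (sum_apply_nonneg_of_mem hoff hcol hj)
        (mem_filter.mp hj).2
    · have hxj : 0 < x j := not_le.mp fun h => hj (mem_filter.mpr ⟨mem_univ j, h⟩)
      exact mul_nonpos_of_nonpos_of_nonneg
        (sum_nonpos fun k hk => hoff k j (ne_of_mem_of_not_mem hk hj)) hxj.le
  linarith

end Matrix

section MPE

variable {ι : Type*} [Fintype ι] [DecidableEq ι]

noncomputable def mpeMatrix (Δt : ℝ) (fn : ι → ℝ) (p d : ι → ι → ℝ) : Matrix ι ι ℝ :=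
  diagonal (fun i => 1 + Δt * (∑ j, d i j) / fn i) - of fun i j => Δt * p i j / fn j

variable {Δt : ℝ} {fn : ι → ℝ} {p d : ι → ι → ℝ}

lemma mpeMatrix_apply_nonpos_of_ne (hΔt : 0 ≤ Δt) (hfn : ∀ i, 0 < fn i) (hp : ∀ i j, 0 ≤ p i j)
    {i j : ι} (hij : i ≠ j) : mpeMatrix Δt fn p d i j ≤ 0 := by
  rw [mpeMatrix, Matrix.sub_apply, diagonal_apply_ne _ hij, of_apply, zero_sub, neg_nonpos]
  exact div_nonneg (mul_nonneg hΔt (hp i j)) (hfn j).le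

lemma sum_mpeMatrix_apply (hpd : ∀ i j, p i j = d j i) (j : ι) :
    ∑ i, mpeMatrix Δt fn p d i j = 1 := by
  simp only [mpeMatrix, Matrix.sub_apply, of_apply, sum_sub_distrib, diagonal_apply, sum_ite_eq',
    mem_univ, if_true, hpd, ← sum_div, ← mul_sum]
  ring

lemma mpeMatrix_mulVec {fn1 : ι → ℝ}
    (hupd : ∀ i, fn1 i = fn i +
      Δt * (∑ j, p i j * (fn1 j / fn j) - ∑ j, d i j * (fn1 i / fn i))) :
    mpeMatrix Δt fn p d *ᵥ fn1 = fn := by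
  ext i
  have hprod : ∑ j, Δt * p i j / fn j * fn1 j = Δt * ∑ j, p i j * (fn1 j / fn j) := by
    rw [mul_sum]
    exact sum_congr rfl fun j _ => by ring
  have hdest : Δt * (∑ j, d i j) / fn i * fn1 i = Δt * ∑ j, d i j * (fn1 i / fn i) := by
    rw [← sum_mul]
    ring
  rw [mpeMatrix, sub_mulVec, Pi.sub_apply, mulVec_diagonal]
  simp only [mulVec, dotProduct, of_apply]
  linarith [hupd i]

end MPE

theorem MPE_unconditionally_positive_general
    (N : ℕ) (Δt : ℝ) (hΔt : 0 < Δt)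
    (fn fn1 : Fin N → ℝ) (hfn : ∀ i, 0 < fn i)
    (p d : Fin N → Fin N → ℝ)
    (hp : ∀ i j, 0 ≤ p i j)
    (hsym : ∀ i j, i ≠ j → p i j = d j i)
    (hpd : ∀ i, p i i = 0) (hdd : ∀ i, d i i = 0)
    (hupd : ∀ i, fn1 i = fn i +
      Δt * (∑ j, p i j * (fn1 j / fn j) - ∑ j, d i j * (fn1 i / fn i))) :
    ∀ i, 0 < fn1 i := by
  have hpd_swap : ∀ i j, p i j = d j i := fun i j => by
    rcases eq_or_ne i j with rfl | hij
    · rw [hpd, hdd]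
    · exact hsym i j hij
  refine pos_of_mulVec_pos (A := mpeMatrix Δt fn p d)
    (fun _ _ => mpeMatrix_apply_nonpos_of_ne hΔt.le hfn hp)
    (fun j => (sum_mpeMatrix_apply hpd_swap j).symm ▸ zero_le_one) fun i => ?_
  rw [mpeMatrix_mulVec hupd]
  exact hfn i

theorem MPE_unconditionally_positive
    (N : ℕ) (Δt : ℝ) (hΔt : 0 < Δt)
    (fn fn1 : Fin N → ℝ) (hfn : ∀ i, 0 < fn i)
    (p d : Fin N → Fin N → ℝ)
    (hp : ∀ i j, 0 ≤ p i j) (hd : ∀ i j, 0 ≤ d i j)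
    (hsym : ∀ i j, i ≠ j → p i j = d j i)
    (hpd : ∀ i, p i i = 0) (hdd : ∀ i, d i i = 0)
    (hupd : ∀ i, fn1 i = fn i +
      Δt * (∑ j, p i j * (fn1 j / fn j) - ∑ j, d i j * (fn1 i / fn i))) :
    ∀ i, 0 < fn1 i :=
  MPE_unconditionally_positive_general N Δt hΔt fn fn1 hfn p d hp hsym hpd hdd hupd
end

section
/- Each stage of the second-order modified Patankar-Runge-Kutta scheme is conservative: if the intermediate stage f̃ and the update f^{n+1} satisfy the MPRK equations with rates satisfying p_{i,j} = d_{j,i} for i ≠ j and zero diagonals, then ∑_i f̃_i = ∑_i f_i^n and ∑_i f_i^{n+1} = ∑_i f_i^n. -/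
/-!
Both stages have the form `x i = y i + c * (∑ j, q i j * g j - ∑ j, r i j * g i)` with
`q i j = r j i` for all `i, j`: what leaves `i` towards `j` is exactly what `j` gains from `i`,
so the Patankar-weighted fluxes cancel in pairs after summing over `i`, whatever the weights `g`.
-/

open Finset

lemma eq_swap_of_ne_of_diag_eq_zero {ι M : Type*} [Zero M] {q r : ι → ι → M}
    (hqr : ∀ i j, i ≠ j → q i j = r j i) (hq : ∀ i, q i i = 0) (hr : ∀ i, r i i = 0)
    (i j : ι) : q i j = r j i := by
  obtain rfl | hij := eq_or_ne i j
  · rw [hq, hr]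
  · exact hqr i j hij

variable {ι R : Type*} [Fintype ι] [Ring R]

def netFlux (q r : ι → ι → R) (g : ι → R) (i : ι) : R :=
  ∑ j, q i j * g j - ∑ j, r i j * g i

lemma sum_netFlux_eq_zero {q r : ι → ι → R} (hqr : ∀ i j, q i j = r j i) (g : ι → R) :
    ∑ i, netFlux q r g i = 0 := by
  simp only [netFlux, sum_sub_distrib, hqr]
  rw [sum_comm, sub_self]

lemma sum_eq_sum_of_eq_add_mul_netFlux {q r : ι → ι → R} (hqr : ∀ i j, q i j = r j i)
    {x y g : ι → R} (c : R) (h : ∀ i, x i = y i + c * netFlux q r g i) :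
    ∑ i, x i = ∑ i, y i := by
  rw [sum_congr rfl fun i _ => h i, sum_add_distrib, ← mul_sum, sum_netFlux_eq_zero hqr,
    mul_zero, add_zero]

theorem MPRK_conservative_general
    (N : ℕ) (Δt : ℝ)
    (fn ftil fn1 : Fin N → ℝ)
    (p d : Fin N → Fin N → (Fin N → ℝ) → ℝ)
    (hsym : ∀ i j, i ≠ j → ∀ f, p i j f = d j i f)
    (hpd : ∀ i f, p i i f = 0) (hdd : ∀ i f, d i i f = 0)
    (hstage : ∀ i, ftil i = fn i +
      Δt * (∑ j, p i j fn * (ftil j / fn j) - ∑ j, d i j fn * (ftil i / fn i)))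
    (hupd : ∀ i, fn1 i = fn i +
      (Δt / 2) * (∑ j, (p i j fn + p i j ftil) * (fn1 j / ftil j)
        - ∑ j, (d i j fn + d i j ftil) * (fn1 i / ftil i))) :
    (∑ i, ftil i = ∑ i, fn i) ∧ (∑ i, fn1 i = ∑ i, fn i) := by
  have hswap (f : Fin N → ℝ) (i j : Fin N) : p i j f = d j i f :=
    eq_swap_of_ne_of_diag_eq_zero (fun i j h => hsym i j h f) (hpd · f) (hdd · f) i j
  refine ⟨sum_eq_sum_of_eq_add_mul_netFlux (hswap fn) Δt hstage, ?_⟩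
  exact sum_eq_sum_of_eq_add_mul_netFlux (q := fun i j => p i j fn + p i j ftil)
    (r := fun i j => d i j fn + d i j ftil) (fun i j => by rw [hswap fn, hswap ftil])
    (Δt / 2) hupd

theorem MPRK_conservative
    (N : ℕ) (Δt : ℝ) (hΔt : 0 < Δt)
    (fn ftil fn1 : Fin N → ℝ)
    (hfn : ∀ i, 0 < fn i) (hftil : ∀ i, 0 < ftil i)
    (p d : Fin N → Fin N → (Fin N → ℝ) → ℝ)
    (hp : ∀ i j f, 0 ≤ p i j f) (hd : ∀ i j f, 0 ≤ d i j f)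
    (hsym : ∀ i j, i ≠ j → ∀ f, p i j f = d j i f)
    (hpd : ∀ i f, p i i f = 0) (hdd : ∀ i f, d i i f = 0)
    (hstage : ∀ i, ftil i = fn i +
      Δt * (∑ j, p i j fn * (ftil j / fn j) - ∑ j, d i j fn * (ftil i / fn i)))
    (hupd : ∀ i, fn1 i = fn i +
      (Δt / 2) * (∑ j, (p i j fn + p i j ftil) * (fn1 j / ftil j)
        - ∑ j, (d i j fn + d i j ftil) * (fn1 i / ftil i))) :
    (∑ i, ftil i = ∑ i, fn i) ∧ (∑ i, fn1 i = ∑ i, fn i) :=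
  MPRK_conservative_general N Δt fn ftil fn1 p d hsym hpd hdd hstage hupd
end

section
/- The Chang-Cooper weight function δ(λ) = 1/(1 − exp(λ)) + 1/λ is strictly decreasing on ℝ∖{0} (extended continuously by δ(0) = 1/2), with limits δ(λ) → 1 as λ → −∞ and δ(λ) → 0 as λ → +∞. -/
/-!
Writing `t = x / 2`, one has `δ x = 1/2 - (coth t - 1/t) / 2`, so `δ - 1/2` is odd and it
suffices to work on `[0, ∞)`. There `δ x < 1/2` is `tanh t < t`, and
`δ' x = eˣ/(eˣ - 1)² - 1/x² < 0` is `t < sinh t`, squared.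
-/

open Real Filter Set Topology

theorem Real.sinh_lt_mul_cosh {t : ℝ} (ht : 0 < t) : sinh t < t * cosh t := by
  have hderiv (s : ℝ) : HasDerivAt (fun s => s * cosh s - sinh s) (s * sinh s) s :=
    ((hasDerivAt_id' s |>.mul (hasDerivAt_cosh s)).sub (hasDerivAt_sinh s)).congr_deriv (by ring)
  have hmono : StrictMonoOn (fun s => s * cosh s - sinh s) (Ici 0) := by
    refine strictMonoOn_of_deriv_pos (convex_Ici 0) (by fun_prop) fun s hs => ?_
    rw [interior_Ici] at hs
    rw [(hderiv s).deriv]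
    exact mul_pos hs (sinh_pos_iff.2 hs)
  simpa using hmono self_mem_Ici ht.le ht

theorem Real.exp_eq_exp_half_mul_exp_half (x : ℝ) : exp x = exp (x / 2) * exp (x / 2) := by
  rw [← exp_add, add_halves]

theorem Real.two_mul_sinh_half_mul_exp_half (x : ℝ) :
    2 * sinh (x / 2) * exp (x / 2) = exp x - 1 := by
  rw [sinh_eq, exp_neg, exp_eq_exp_half_mul_exp_half x]
  field_simp

theorem Real.two_mul_cosh_half_mul_exp_half (x : ℝ) :
    2 * cosh (x / 2) * exp (x / 2) = exp x + 1 := by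
  rw [cosh_eq, exp_neg, exp_eq_exp_half_mul_exp_half x]
  field_simp

theorem Real.exp_sub_one_lt_half_mul_exp_add_one {x : ℝ} (hx : 0 < x) :
    exp x - 1 < x / 2 * (exp x + 1) := by
  rw [← two_mul_sinh_half_mul_exp_half, ← two_mul_cosh_half_mul_exp_half]
  nlinarith [sinh_lt_mul_cosh (half_pos hx), exp_pos (x / 2)]

theorem Real.sq_mul_exp_lt_exp_sub_one_sq {x : ℝ} (hx : 0 < x) :
    x ^ 2 * exp x < (exp x - 1) ^ 2 := by
  have hsinh : x / 2 < sinh (x / 2) := self_lt_sinh_iff.2 (half_pos hx)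
  have hlt : x * exp (x / 2) < exp x - 1 := by
    rw [← two_mul_sinh_half_mul_exp_half]
    nlinarith [exp_pos (x / 2)]
  calc x ^ 2 * exp x = (x * exp (x / 2)) ^ 2 := by
        rw [mul_pow, sq (exp _), ← exp_eq_exp_half_mul_exp_half]
    _ < (exp x - 1) ^ 2 := pow_lt_pow_left₀ hlt (by positivity) two_ne_zero

noncomputable def changCooperWeight (x : ℝ) : ℝ :=
  if x = 0 then 1 / 2 else 1 / (1 - exp x) + 1 / x

theorem changCooperWeight_zero : changCooperWeight 0 = 1 / 2 := if_pos rfl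

theorem changCooperWeight_of_ne_zero {x : ℝ} (hx : x ≠ 0) :
    changCooperWeight x = 1 / (1 - exp x) + 1 / x := if_neg hx

theorem changCooperWeight_neg (x : ℝ) : changCooperWeight (-x) = 1 - changCooperWeight x := by
  rcases eq_or_ne x 0 with rfl | hx
  · norm_num [changCooperWeight_zero]
  have hexp : exp x ≠ 1 := mt (exp_eq_one_iff x).1 hx
  have : 1 - exp x ≠ 0 := sub_ne_zero.2 hexp.symm
  have : exp x - 1 ≠ 0 := sub_ne_zero.2 hexp
  rw [changCooperWeight_of_ne_zero hx, changCooperWeight_of_ne_zero (neg_ne_zero.2 hx), exp_neg]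
  field_simp
  ring

theorem changCooperWeight_lt_half {x : ℝ} (hx : 0 < x) : changCooperWeight x < 1 / 2 := by
  have hexp : 0 < exp x - 1 := sub_pos.2 (one_lt_exp_iff.2 hx)
  have hdiff : 1 / 2 - (1 / (1 - exp x) + 1 / x) =
      (x / 2 * (exp x + 1) - (exp x - 1)) / (x * (exp x - 1)) := by
    field_simp [(by linarith : 1 - exp x < 0).ne]
    ring
  have hpos := div_pos (sub_pos.2 (exp_sub_one_lt_half_mul_exp_add_one hx)) (mul_pos hx hexp)
  rw [changCooperWeight_of_ne_zero hx.ne']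
  linarith

theorem hasDerivAt_changCooperWeight {x : ℝ} (hx : x ≠ 0) :
    HasDerivAt changCooperWeight (exp x / (exp x - 1) ^ 2 - 1 / x ^ 2) x := by
  have hexp : 1 - exp x ≠ 0 := sub_ne_zero.2 (Ne.symm (mt (exp_eq_one_iff x).1 hx))
  have hformula : HasDerivAt (fun y => (1 - exp y)⁻¹ + y⁻¹)
      (exp x / (exp x - 1) ^ 2 - 1 / x ^ 2) x :=
    (((hasDerivAt_exp x).const_sub 1).inv hexp |>.add (hasDerivAt_inv hx)).congr_deriv
      (by rw [← neg_sub, neg_sq]; ring)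
  refine hformula.congr_of_eventuallyEq ?_
  filter_upwards [isOpen_ne.mem_nhds hx] with y hy
  simp [changCooperWeight_of_ne_zero hy]

theorem strictAntiOn_changCooperWeight_Ioi : StrictAntiOn changCooperWeight (Ioi 0) := by
  refine strictAntiOn_of_deriv_neg (convex_Ioi 0)
    (fun x hx => (hasDerivAt_changCooperWeight (ne_of_gt hx)).continuousAt.continuousWithinAt)
    fun x hx => ?_
  rw [interior_Ioi, mem_Ioi] at hx
  rw [(hasDerivAt_changCooperWeight hx.ne').deriv, sub_neg,
    div_lt_div_iff₀ (pow_pos (sub_pos.2 (one_lt_exp_iff.2 hx)) 2) (by positivity)]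
  linarith [sq_mul_exp_lt_exp_sub_one_sq hx]

theorem strictAnti_changCooperWeight : StrictAnti changCooperWeight := by
  have hodd : StrictAnti fun x => changCooperWeight x - 1 / 2 := by
    refine strictAnti_of_odd_strictAntiOn_nonneg (fun x => by rw [changCooperWeight_neg]; ring) ?_
    rintro x (hx : 0 ≤ x) y (hy : 0 ≤ y) hxy
    rcases hx.eq_or_lt with rfl | hx
    · simpa [changCooperWeight_zero] using changCooperWeight_lt_half hxy
    · simpa using strictAntiOn_changCooperWeight_Ioi hx (hx.trans hxy) hxy
  exact fun x y hxy => by simpa using hodd hxy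

theorem tendsto_changCooperWeight_atBot : Tendsto changCooperWeight atBot (𝓝 1) := by
  have hformula : Tendsto (fun x => (1 - exp x)⁻¹ + x⁻¹) atBot (𝓝 1) := by
    simpa using ((tendsto_exp_atBot.const_sub 1).inv₀ (by norm_num)).add tendsto_inv_atBot_zero
  refine hformula.congr' ?_
  filter_upwards [eventually_lt_atBot 0] with x hx
  simp [changCooperWeight_of_ne_zero hx.ne]

theorem tendsto_changCooperWeight_atTop : Tendsto changCooperWeight atTop (𝓝 0) := by
  have hdenom : Tendsto (fun x => 1 - exp x) atTop atBot :=
    tendsto_atBot_add_const_left _ 1 (tendsto_neg_atTop_atBot.comp tendsto_exp_atTop)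
  have hformula : Tendsto (fun x => (1 - exp x)⁻¹ + x⁻¹) atTop (𝓝 0) := by
    simpa using (tendsto_inv_atBot_zero.comp hdenom).add tendsto_inv_atTop_zero
  refine hformula.congr' ?_
  filter_upwards [eventually_gt_atTop 0] with x hx
  simp [changCooperWeight_of_ne_zero hx.ne']

theorem ChangCooper_delta_strictAnti_and_limits
    (δ : ℝ → ℝ)
    (hδ : ∀ l : ℝ, l ≠ 0 → δ l = 1 / (1 - Real.exp l) + 1 / l)
    (hδ0 : δ 0 = 1 / 2) :
    StrictAnti δ ∧
    Filter.Tendsto δ Filter.atBot (nhds 1) ∧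
    Filter.Tendsto δ Filter.atTop (nhds 0) := by
  obtain rfl : δ = changCooperWeight := funext fun x => by
    rcases eq_or_ne x 0 with rfl | hx
    · rw [hδ0, changCooperWeight_zero]
    · rw [hδ x hx, changCooperWeight_of_ne_zero hx]
  exact ⟨strictAnti_changCooperWeight, tendsto_changCooperWeight_atBot,
    tendsto_changCooperWeight_atTop⟩
end

section
/- The stationary solution f_∞(w) = K (1 − w²)^{−2} ((1+w)/(1−w))^{u/(2σ²)} exp(−(1 − u w)/(σ²(1 − w²))) satisfies the stationary flux equation (w − u) f_∞(w) + d/dw (D(w) f_∞(w)) = 0 on (−1, 1), where D(w) = (σ²/2)(1 − w²)². -/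
open Set

/-! On `(-1, 1)` the factors `(1 - w²)²` cancel, so `D f_∞ = (σ²K/2) g` with
`g = ((1+w)/(1-w))^(u/(2σ²)) exp(-(1-uw)/(σ²(1-w²)))`. The logarithmic derivative of `g` is
`u/(σ²(1-w²)) + (u(1+w²) - 2w)/(σ²(1-w²)²) = -(w-u)/D(w)`, hence `(D f_∞)' = -(w-u) f_∞`. -/

lemma one_sub_sq_ne_zero_of_mem_Ioo {w : ℝ} (hw : w ∈ Ioo (-1 : ℝ) 1) : 1 - w ^ 2 ≠ 0 := by
  nlinarith [hw.1, hw.2]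

lemma hasDerivAt_one_add_div_one_sub_rpow (p : ℝ) {w : ℝ} (hw : w ∈ Ioo (-1 : ℝ) 1) :
    HasDerivAt (fun x => ((1 + x) / (1 - x)) ^ p)
      (2 * p / (1 - w ^ 2) * ((1 + w) / (1 - w)) ^ p) w := by
  have h_sq := one_sub_sq_ne_zero_of_mem_Ioo hw
  obtain ⟨hw₁, hw₂⟩ := hw
  have h_add : 1 + w ≠ 0 := by linarith
  have h_sub : 1 - w ≠ 0 := by linarith
  have h_ratio : 0 < (1 + w) / (1 - w) := div_pos (by linarith) (by linarith)
  have h_deriv_ratio : HasDerivAt (fun x => (1 + x) / (1 - x)) (2 / (1 - w) ^ 2) w := by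
    refine (((hasDerivAt_id w).const_add 1).div ((hasDerivAt_id w).const_sub 1) h_sub).congr_deriv ?_
    simp only [id]
    ring
  convert h_deriv_ratio.rpow_const (p := p) (Or.inl h_ratio.ne') using 1
  rw [Real.rpow_sub_one h_ratio.ne']
  field_simp
  ring

lemma hasDerivAt_neg_one_sub_mul_div (σ u : ℝ) {w : ℝ} (hσ : σ ≠ 0) (hw : 1 - w ^ 2 ≠ 0) :
    HasDerivAt (fun x => -(1 - u * x) / (σ ^ 2 * (1 - x ^ 2)))
      ((u * (1 + w ^ 2) - 2 * w) / (σ ^ 2 * (1 - w ^ 2) ^ 2)) w := by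
  have h_num : HasDerivAt (fun x : ℝ => -(1 - u * x)) (-(-(u * 1))) w :=
    (((hasDerivAt_id w).const_mul u).const_sub 1).neg
  have h_den : HasDerivAt (fun x : ℝ => σ ^ 2 * (1 - x ^ 2)) (σ ^ 2 * -(↑2 * w ^ (2 - 1))) w :=
    ((hasDerivAt_pow 2 w).const_sub 1).const_mul (σ ^ 2)
  refine (h_num.div h_den (by positivity)).congr_deriv ?_
  field_simp
  ring

lemma hasDerivAt_stationary_weight (σ u : ℝ) (hσ : σ ≠ 0) {w : ℝ} (hw : w ∈ Ioo (-1 : ℝ) 1) :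
    HasDerivAt (fun x => ((1 + x) / (1 - x)) ^ (u / (2 * σ ^ 2))
        * Real.exp (-(1 - u * x) / (σ ^ 2 * (1 - x ^ 2))))
      (-(w - u) / (σ ^ 2 / 2 * (1 - w ^ 2) ^ 2)
        * (((1 + w) / (1 - w)) ^ (u / (2 * σ ^ 2))
          * Real.exp (-(1 - u * w) / (σ ^ 2 * (1 - w ^ 2))))) w := by
  refine ((hasDerivAt_one_add_div_one_sub_rpow (u / (2 * σ ^ 2)) hw).mul
    (hasDerivAt_neg_one_sub_mul_div σ u hσ (one_sub_sq_ne_zero_of_mem_Ioo hw)).exp).congr_deriv ?_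
  field_simp
  ring

theorem stationary_solution_flux_vanishes_general
    (σ u K : ℝ) (hσ : 0 < σ) :
    ∀ w ∈ Set.Ioo (-1 : ℝ) 1,
      (w - u) * (fun w => K / (1 - w ^ 2) ^ 2
          * ((1 + w) / (1 - w)) ^ (u / (2 * σ ^ 2))
          * Real.exp (-(1 - u * w) / (σ ^ 2 * (1 - w ^ 2)))) w
      + deriv (fun w => (σ ^ 2 / 2 * (1 - w ^ 2) ^ 2)
          * (K / (1 - w ^ 2) ^ 2
          * ((1 + w) / (1 - w)) ^ (u / (2 * σ ^ 2))
          * Real.exp (-(1 - u * w) / (σ ^ 2 * (1 - w ^ 2))))) w = 0 := by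
  intro w hw
  have h_diffusion_mul_density : (fun x => (σ ^ 2 / 2 * (1 - x ^ 2) ^ 2)
        * (K / (1 - x ^ 2) ^ 2 * ((1 + x) / (1 - x)) ^ (u / (2 * σ ^ 2))
          * Real.exp (-(1 - u * x) / (σ ^ 2 * (1 - x ^ 2)))))
      =ᶠ[nhds w] fun x => σ ^ 2 / 2 * K * (((1 + x) / (1 - x)) ^ (u / (2 * σ ^ 2))
          * Real.exp (-(1 - u * x) / (σ ^ 2 * (1 - x ^ 2)))) := by
    filter_upwards [isOpen_Ioo.mem_nhds hw] with x hx
    have := one_sub_sq_ne_zero_of_mem_Ioo hx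
    field_simp
  have := one_sub_sq_ne_zero_of_mem_Ioo hw
  rw [h_diffusion_mul_density.deriv_eq,
    ((hasDerivAt_stationary_weight σ u hσ.ne' hw).const_mul (σ ^ 2 / 2 * K)).deriv]
  field_simp
  ring

theorem stationary_solution_flux_vanishes
    (σ u K : ℝ) (hσ : 0 < σ) (hu : u ∈ Set.Ioo (-1 : ℝ) 1) (hK : 0 < K) :
    ∀ w ∈ Set.Ioo (-1 : ℝ) 1,
      (w - u) * (fun w => K / (1 - w ^ 2) ^ 2
          * ((1 + w) / (1 - w)) ^ (u / (2 * σ ^ 2))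
          * Real.exp (-(1 - u * w) / (σ ^ 2 * (1 - w ^ 2)))) w
      + deriv (fun w => (σ ^ 2 / 2 * (1 - w ^ 2) ^ 2)
          * (K / (1 - w ^ 2) ^ 2
          * ((1 + w) / (1 - w)) ^ (u / (2 * σ ^ 2))
          * Real.exp (-(1 - u * w) / (σ ^ 2 * (1 - w ^ 2))))) w = 0 :=
  stationary_solution_flux_vanishes_general σ u K hσ
end
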